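/- Assume the Trudinger–Moser property holds with some constant ω ∈ (0,π]. Let (v_n) be a sequence in X with ‖v_n‖_X = 1 for all n, converging weakly in X to some v ∈ X (i.e. ⟨v_n, w⟩_X → ⟨v, w⟩_X for every w ∈ X) with 0 < ‖v‖_X < 1. Then for every 0 < α < 2πω and every 1 < p < (1 − ‖v‖_X²)^{−1}, the sequence (e^{α v_n²}) is bounded in L^p(0,1), i.e. sup_n ∫₀¹ e^{p α v_n²} dx < ∞. -/

import Mathlib

/-!
Split `v n = (v n - w) + w`. Since `‖v n‖ = 1` and `v n ⇀ w`, `‖v n - w‖² → 1 - ‖w‖²`. For Hölder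
conjugates `r, r'` one has `(a + b)² ≤ r a² + r' b²`, so Hölder's inequality bounds
`∫ e^{pα v_n²}` by `(∫ e^{r² pα (v_n - w)²})^{1/r} (∫ e^{r'² pα w²})^{1/r'}`. With `r > 1` close to
`1`, for large `n` the first factor is controlled by the Trudinger–Moser bound, the exponent being
at most `r³ pα (1 - ‖w‖²) < 2πω` after normalising `v n - w`. The second factor, and each of the
finitely many remaining `n`, is finite because `∫ e^{c u²} < ∞` for every `u ∈ X` and `c ≥ 0`:
`u` is a bounded function plus its soft threshold at a high level, whose norm is arbitrarily small.
-/

open MeasureTheory Real Set Filter Topology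

noncomputable section

/-- Integrand of the squared Gagliardo `H^{1/2}` seminorm on `ℝ`. -/
def gagKer (u : ℝ → ℝ) : ℝ × ℝ → ℝ :=
  fun p => (u p.1 - u p.2) ^ 2 / |p.1 - p.2| ^ 2

/-- Integrand of the Gagliardo inner product `⟨u,v⟩_X`. -/
def innerKer (u v : ℝ → ℝ) : ℝ × ℝ → ℝ :=
  fun p => (u p.1 - u p.2) * (v p.1 - v p.2) / |p.1 - p.2| ^ 2

/-- `u ∈ H^{1/2}(ℝ)` : `u ∈ L²(ℝ)` with finite Gagliardo seminorm. -/
def memH (u : ℝ → ℝ) : Prop :=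
  Measurable u ∧ Integrable (fun x => (u x) ^ 2) ∧ Integrable (gagKer u)

/-- Squared Gagliardo seminorm `[u]²`. -/
def gagSq (u : ℝ → ℝ) : ℝ := ∫ p : ℝ × ℝ, gagKer u p

/-- Gagliardo seminorm `[u]`, i.e. the norm `‖u‖_X`. -/
def gagNorm (u : ℝ → ℝ) : ℝ := Real.sqrt (gagSq u)

/-- Inner product `⟨u, v⟩_X`. -/
def innerX (u v : ℝ → ℝ) : ℝ := ∫ p : ℝ × ℝ, innerKer u v p

/-- `u ∈ X` : `u ∈ H^{1/2}(ℝ)` and `u = 0` a.e. outside `(0,1)`. -/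
def memX (u : ℝ → ℝ) : Prop :=
  memH u ∧ ∀ᵐ x : ℝ, x ∉ Ioo (0 : ℝ) 1 → u x = 0

/-- `λ₁ = inf {[u]² : u ∈ X, ‖u‖_{L²(0,1)} = 1}`. -/
def lam1 : ℝ :=
  sInf { t : ℝ | ∃ u : ℝ → ℝ, memX u ∧ (∫ x in Ioo (0 : ℝ) 1, (u x) ^ 2) = 1 ∧ gagSq u = t }

/-- Trudinger–Moser property with constant `ω`. -/
def TMprop (ω : ℝ) : Prop :=
  ∀ α : ℝ, 0 < α → α < 2 * π * ω →
    ∃ K : ℝ, 0 < K ∧ ∀ u : ℝ → ℝ, memX u → gagNorm u ≤ 1 →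
      (∫⁻ x in Ioo (0 : ℝ) 1, ENNReal.ofReal (exp (α * (u x) ^ 2))) ≤ ENNReal.ofReal K

/-- The primitive `F(t) = ∫₀ᵗ f(τ) dτ`. -/
def primF (f : ℝ → ℝ) : ℝ → ℝ := fun t => ∫ τ in (0 : ℝ)..t, f τ

/-- Hypotheses (H). -/
def HypH (f : ℝ → ℝ) : Prop :=
  Continuous f ∧ f 0 = 0 ∧
  (∃ t₀ > (0 : ℝ), ∃ M > (0 : ℝ),
    ∀ t : ℝ, t₀ ≤ |t| → 0 < primF f t ∧ primF f t ≤ M * |f t|) ∧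
  (∀ t : ℝ, t ≠ 0 → 0 < 2 * primF f t ∧ 2 * primF f t ≤ f t * t) ∧
  (Filter.limsup (fun t => primF f t / t ^ 2) (𝓝[≠] (0 : ℝ)) < lam1 / (4 * π)) ∧
  (∀ α : ℝ, 0 < α →
    Filter.Tendsto (fun t => |f t| * exp (-α * t ^ 2)) (Filter.cocompact ℝ) (𝓝 0))

/-- Hypotheses (H') with Trudinger–Moser constant `ω`. -/
def HypH' (f : ℝ → ℝ) (ω : ℝ) : Prop :=
  Continuous f ∧ f 0 = 0 ∧
  (∃ t₀ > (0 : ℝ), ∃ M > (0 : ℝ),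
    ∀ t : ℝ, t₀ ≤ |t| → 0 < primF f t ∧ primF f t ≤ M * |f t|) ∧
  (∀ t : ℝ, t ≠ 0 → 0 < 2 * primF f t ∧ 2 * primF f t ≤ f t * t) ∧
  (Filter.limsup (fun t => primF f t / t ^ 2) (𝓝[≠] (0 : ℝ)) < lam1 / (4 * π)) ∧
  ∃ α₀ : ℝ, 0 < α₀ ∧ α₀ < 2 * π * ω ∧
    (∀ α : ℝ, 0 < α → α < α₀ →
      Filter.Tendsto (fun t => |f t| * exp (-α * t ^ 2)) (Filter.cocompact ℝ) Filter.atTop) ∧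
    (∀ α : ℝ, α₀ < α →
      Filter.Tendsto (fun t => |f t| * exp (-α * t ^ 2)) (Filter.cocompact ℝ) (𝓝 0)) ∧
    ∃ ψ : ℝ → ℝ, memX ψ ∧ gagNorm ψ = 1 ∧
      ∃ b : ℝ, b < ω / (2 * α₀) ∧ ∀ t : ℝ, 0 < t →
        t ^ 2 / (4 * π) - (∫ x in Ioo (0 : ℝ) 1, primF f (t * ψ x)) ≤ b

/-- `u` is a (weak) solution of `(-Δ)^{1/2} u = f(u)` in `(0,1)`, `u = 0` outside. -/
def IsWeakSolution (f u : ℝ → ℝ) : Prop :=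
  memX u ∧ ∀ v : ℝ → ℝ, memX v →
    IntegrableOn (fun x => f (u x) * v x) (Ioo (0 : ℝ) 1) ∧
    innerX u v / (2 * π) = ∫ x in Ioo (0 : ℝ) 1, f (u x) * v x

/-- The energy functional `φ(u) = ‖u‖_X²/(4π) - ∫₀¹ F(u) dx`. -/
def phi (f u : ℝ → ℝ) : ℝ :=
  gagSq u / (4 * π) - ∫ x in Ioo (0 : ℝ) 1, primF f (u x)

/-- `⟨φ'(u), v⟩ = (1/(2π))⟨u,v⟩_X - ∫₀¹ f(u) v dx`. -/
def phiDeriv (f u v : ℝ → ℝ) : ℝ :=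
  innerX u v / (2 * π) - ∫ x in Ioo (0 : ℝ) 1, f (u x) * v x

/-- The Palais–Smale condition at level `c`. -/
def PalaisSmaleAt (f : ℝ → ℝ) (c : ℝ) : Prop :=
  ∀ u : ℕ → ℝ → ℝ, (∀ n, memX (u n)) →
    Filter.Tendsto (fun n => phi f (u n)) Filter.atTop (𝓝 c) →
    (∃ ε : ℕ → ℝ, Filter.Tendsto ε Filter.atTop (𝓝 0) ∧
      ∀ n, ∀ v : ℝ → ℝ, memX v → gagNorm v ≤ 1 → |phiDeriv f (u n) v| ≤ ε n) →
    ∃ w : ℝ → ℝ, memX w ∧ ∃ g : ℕ → ℕ, StrictMono g ∧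
      Filter.Tendsto (fun k => gagNorm (fun x => u (g k) x - w x)) Filter.atTop (𝓝 0)

open scoped ENNReal NNReal

lemma gagKer_nonneg (u : ℝ → ℝ) (q : ℝ × ℝ) : 0 ≤ gagKer u q :=
  div_nonneg (sq_nonneg _) (sq_nonneg _)

lemma gagSq_nonneg (u : ℝ → ℝ) : 0 ≤ gagSq u :=
  integral_nonneg (gagKer_nonneg u)

lemma gagNorm_nonneg (u : ℝ → ℝ) : 0 ≤ gagNorm u :=
  Real.sqrt_nonneg _

lemma gagNorm_sq (u : ℝ → ℝ) : gagNorm u ^ 2 = gagSq u :=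
  Real.sq_sqrt (gagSq_nonneg u)

lemma innerX_self (u : ℝ → ℝ) : innerX u u = gagSq u := by
  simp only [innerX, gagSq, innerKer, gagKer, ← sq]

lemma measurable_gagKer {u : ℝ → ℝ} (hu : Measurable u) : Measurable (gagKer u) := by
  unfold gagKer; fun_prop

lemma measurable_innerKer {u v : ℝ → ℝ} (hu : Measurable u) (hv : Measurable v) :
    Measurable (innerKer u v) := by
  unfold innerKer; fun_prop

lemma abs_innerKer_le (u v : ℝ → ℝ) (q : ℝ × ℝ) :
    |innerKer u v q| ≤ (gagKer u q + gagKer v q) / 2 := by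
  unfold innerKer gagKer
  rw [abs_div, abs_mul, abs_of_nonneg (sq_nonneg |q.1 - q.2|), ← add_div, div_div,
    mul_comm _ (2 : ℝ), ← div_div]
  gcongr
  nlinarith [sq_nonneg (|u q.1 - u q.2| - |v q.1 - v q.2|), sq_abs (u q.1 - u q.2),
    sq_abs (v q.1 - v q.2)]

lemma integrable_innerKer {u v : ℝ → ℝ} (hu : Measurable u) (hv : Measurable v)
    (hgu : Integrable (gagKer u)) (hgv : Integrable (gagKer v)) :
    Integrable (innerKer u v) :=
  ((hgu.add hgv).div_const 2).mono' (measurable_innerKer hu hv).aestronglyMeasurable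
    (ae_of_all _ (abs_innerKer_le u v))

lemma gagKer_sub (u w : ℝ → ℝ) :
    gagKer (fun x => u x - w x) = fun q => gagKer u q - 2 * innerKer u w q + gagKer w q := by
  funext q; unfold gagKer innerKer; ring

lemma gagKer_const_mul (c : ℝ) (u : ℝ → ℝ) :
    gagKer (fun x => c * u x) = fun q => c ^ 2 * gagKer u q := by
  funext q; unfold gagKer; ring

lemma gagSq_const_mul (c : ℝ) (u : ℝ → ℝ) : gagSq (fun x => c * u x) = c ^ 2 * gagSq u := by
  rw [gagSq, gagKer_const_mul, integral_const_mul, gagSq]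

lemma gagSq_sub {u w : ℝ → ℝ} (hu : memH u) (hw : memH w) :
    gagSq (fun x => u x - w x) = gagSq u - 2 * innerX u w + gagSq w := by
  have hinner : Integrable fun q => 2 * innerKer u w q :=
    (integrable_innerKer hu.1 hw.1 hu.2.2 hw.2.2).const_mul 2
  have hdiff : Integrable fun q => gagKer u q - 2 * innerKer u w q := hu.2.2.sub hinner
  rw [gagSq, gagKer_sub, integral_add hdiff hw.2.2, integral_sub hu.2.2 hinner,
    integral_const_mul, gagSq, gagSq, innerX]

lemma memX_const_mul {u : ℝ → ℝ} (hu : memX u) (c : ℝ) : memX (fun x => c * u x) := by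
  obtain ⟨⟨hm, hL2, hg⟩, hvan⟩ := hu
  refine ⟨⟨measurable_const.mul hm, ?_, ?_⟩, ?_⟩
  · simpa only [mul_pow] using hL2.const_mul (c ^ 2)
  · rw [gagKer_const_mul]; exact hg.const_mul _
  · filter_upwards [hvan] with x hx hxn
    rw [hx hxn, mul_zero]

lemma memX_sub {u w : ℝ → ℝ} (hu : memX u) (hw : memX w) : memX (fun x => u x - w x) := by
  obtain ⟨⟨hm, hL2, hg⟩, hvan⟩ := hu
  obtain ⟨⟨hm', hL2', hg'⟩, hvan'⟩ := hw
  refine ⟨⟨hm.sub hm', ?_, ?_⟩, ?_⟩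
  · refine ((hL2.const_mul 2).add (hL2'.const_mul 2)).mono'
      ((hm.sub hm').pow_const 2).aestronglyMeasurable (ae_of_all _ fun x => ?_)
    rw [Real.norm_eq_abs, abs_of_nonneg (sq_nonneg _)]
    show _ ≤ 2 * u x ^ 2 + 2 * w x ^ 2
    nlinarith [sq_nonneg (u x + w x)]
  · rw [gagKer_sub]
    exact (hg.sub ((integrable_innerKer hm hm' hg hg').const_mul 2)).add hg'
  · filter_upwards [hvan, hvan'] with x hx hx' hxn
    rw [hx hxn, hx' hxn, sub_zero]

lemma LipschitzWith.gagKer_comp_le {φ : ℝ → ℝ} {K : ℝ≥0} (hφ : LipschitzWith K φ) (u : ℝ → ℝ)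
    (q : ℝ × ℝ) : gagKer (fun x => φ (u x)) q ≤ K ^ 2 * gagKer u q := by
  unfold gagKer
  rw [← mul_div_assoc, ← mul_pow]
  gcongr ?_ / _
  rw [sq_le_sq, abs_mul, NNReal.abs_eq]
  simpa only [Real.dist_eq] using hφ.dist_le_mul (u q.1) (u q.2)

lemma LipschitzWith.memX_comp {φ : ℝ → ℝ} {K : ℝ≥0} (hφ : LipschitzWith K φ) (hφ0 : φ 0 = 0)
    {u : ℝ → ℝ} (hu : memX u) : memX (fun x => φ (u x)) := by
  obtain ⟨⟨hm, hL2, hg⟩, hvan⟩ := hu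
  have hmφ : Measurable fun x => φ (u x) := hφ.continuous.measurable.comp hm
  refine ⟨⟨hmφ, ?_, ?_⟩, ?_⟩
  · refine (hL2.const_mul (K ^ 2 : ℝ)).mono' (hmφ.pow_const 2).aestronglyMeasurable
      (ae_of_all _ fun x => ?_)
    have hx : |φ (u x)| ≤ K * |u x| := by
      simpa only [Real.dist_eq, hφ0, sub_zero] using hφ.dist_le_mul (u x) 0
    rw [Real.norm_eq_abs, abs_of_nonneg (sq_nonneg _), ← sq_abs, ← sq_abs (u x), ← mul_pow]
    gcongr
  · exact (hg.const_mul (K ^ 2 : ℝ)).mono' (measurable_gagKer hmφ).aestronglyMeasurable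
      (ae_of_all _ fun q => by
        rw [Real.norm_eq_abs, abs_of_nonneg (gagKer_nonneg _ _)]
        exact hφ.gagKer_comp_le u q)
  · filter_upwards [hvan] with x hx hxn
    rw [hx hxn, hφ0]

-- `t` minus its clamp to `[-M, M]`
def softThreshold (M t : ℝ) : ℝ := max (t - M) 0 + min (t + M) 0

lemma softThreshold_eq_zero {M t : ℝ} (h : |t| ≤ M) : softThreshold M t = 0 := by
  obtain ⟨h₁, h₂⟩ := abs_le.mp h
  rw [softThreshold, max_eq_right (by linarith), min_eq_right (by linarith), add_zero]

lemma abs_sub_softThreshold_le {M : ℝ} (hM : 0 ≤ M) (t : ℝ) : |t - softThreshold M t| ≤ M := by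
  unfold softThreshold
  rcases le_total t (-M) with h | h
  · rw [max_eq_right (by linarith), min_eq_left (by linarith), abs_le]
    constructor <;> linarith
  rcases le_total t M with h' | h'
  · rw [max_eq_right (by linarith), min_eq_right (by linarith), abs_le]
    constructor <;> linarith
  · rw [max_eq_left (by linarith), min_eq_right (by linarith), abs_le]
    constructor <;> linarith

lemma lipschitzWith_softThreshold (M : ℝ) : LipschitzWith 2 (softThreshold M) := by
  refine LipschitzWith.of_dist_le_mul fun a b => ?_
  simp only [Real.dist_eq, softThreshold, NNReal.coe_ofNat]
  calc |max (a - M) 0 + min (a + M) 0 - (max (b - M) 0 + min (b + M) 0)|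
      ≤ |max (a - M) 0 - max (b - M) 0| + |min (a + M) 0 - min (b + M) 0| := by
        rw [add_sub_add_comm]; exact abs_add_le _ _
    _ ≤ |a - b| + |a - b| := by
        exact add_le_add (by simpa using abs_max_sub_max_le_abs (a - M) (b - M) 0)
          (by simpa using abs_min_sub_min_le_max (a + M) 0 (b + M) 0)
    _ = 2 * |a - b| := by ring

lemma tendsto_gagSq_softThreshold {u : ℝ → ℝ} (hu : Measurable u) (hg : Integrable (gagKer u)) :
    Tendsto (fun k : ℕ => gagSq (fun x => softThreshold k (u x))) atTop (𝓝 0) := by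
  have hlim : ∀ q : ℝ × ℝ,
      Tendsto (fun k : ℕ => gagKer (fun x => softThreshold k (u x)) q) atTop (𝓝 0) := by
    intro q
    refine tendsto_const_nhds.congr' ?_
    filter_upwards [(tendsto_natCast_atTop_atTop (R := ℝ)).eventually_ge_atTop
      (max |u q.1| |u q.2|)] with k hk
    simp [gagKer, softThreshold_eq_zero ((le_max_left _ _).trans hk),
      softThreshold_eq_zero ((le_max_right _ _).trans hk)]
  simpa only [gagSq, integral_zero] using tendsto_integral_of_dominated_convergence
    (F := fun k : ℕ => gagKer (fun x => softThreshold k (u x))) (fun q => 2 ^ 2 * gagKer u q)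
    (fun k => (measurable_gagKer
      ((lipschitzWith_softThreshold _).continuous.measurable.comp hu)).aestronglyMeasurable)
    (hg.const_mul _)
    (fun k => ae_of_all _ fun q => by
      rw [Real.norm_eq_abs, abs_of_nonneg (gagKer_nonneg _ _)]
      exact_mod_cast (lipschitzWith_softThreshold _).gagKer_comp_le u q)
    (ae_of_all _ hlim)

lemma TMprop.exists_lintegral_exp_le {ω β : ℝ} (hTM : TMprop ω) (hβ0 : 0 < β)
    (hβ : β < 2 * π * ω) :
    ∃ K : ℝ, ∀ u : ℝ → ℝ, memX u → ∀ c : ℝ, 0 ≤ c → c * gagSq u ≤ β →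
      ∫⁻ x in Ioo (0 : ℝ) 1, ENNReal.ofReal (exp (c * u x ^ 2)) ≤ ENNReal.ofReal K := by
  obtain ⟨K, -, hK⟩ := hTM β hβ0 hβ
  refine ⟨K, fun u hu c hc hcu => ?_⟩
  set t := Real.sqrt (c / β)
  have ht : t ^ 2 = c / β := Real.sq_sqrt (div_nonneg hc hβ0.le)
  have hnorm : gagNorm (fun x => t * u x) ≤ 1 := by
    rwa [gagNorm, Real.sqrt_le_one, gagSq_const_mul, ht, div_mul_eq_mul_div, div_le_one hβ0]
  calc ∫⁻ x in Ioo (0 : ℝ) 1, ENNReal.ofReal (exp (c * u x ^ 2))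
      = ∫⁻ x in Ioo (0 : ℝ) 1, ENNReal.ofReal (exp (β * (t * u x) ^ 2)) := by
        congr! 4 with x
        rw [mul_pow, ht]
        field_simp
    _ ≤ ENNReal.ofReal K := hK _ (memX_const_mul hu t) hnorm

lemma add_sq_le_of_holderConjugate {r s : ℝ} (h : r.HolderConjugate s) (a b : ℝ) :
    (a + b) ^ 2 ≤ r * a ^ 2 + s * b ^ 2 := by
  have hrs := h.sub_one_mul_conj
  have hr := h.sub_one_pos
  nlinarith [sq_nonneg ((r - 1) * a - b)]

lemma lintegral_exp_mul_sq_lt_top {ω : ℝ} (hω : 0 < ω) (hTM : TMprop ω) {u : ℝ → ℝ}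
    (hu : memX u) {c : ℝ} (hc : 0 ≤ c) :
    ∫⁻ x in Ioo (0 : ℝ) 1, ENNReal.ofReal (exp (c * u x ^ 2)) < ∞ := by
  obtain ⟨K, hK⟩ := hTM.exists_lintegral_exp_le (β := π * ω) (by positivity)
    (by nlinarith [pi_pos])
  have hsmall := ((tendsto_gagSq_softThreshold hu.1.1 hu.1.2.2).const_mul (2 * c))
    |>.eventually_lt_const (by simpa using mul_pos pi_pos hω)
  obtain ⟨k, hk⟩ := hsmall.exists
  set b := fun x => softThreshold k (u x)
  have hb : memX b :=
    (lipschitzWith_softThreshold k).memX_comp (softThreshold_eq_zero (by simp)) hu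
  have hsplit : ∀ x, c * u x ^ 2 ≤ 2 * c * k ^ 2 + 2 * c * b x ^ 2 := fun x => by
    have hbdd : (u x - b x) ^ 2 ≤ k ^ 2 := by
      nlinarith [abs_le.mp (abs_sub_softThreshold_le k.cast_nonneg (u x))]
    have hsq := add_sq_le_of_holderConjugate .two_two (u x - b x) (b x)
    rw [sub_add_cancel] at hsq
    nlinarith
  calc ∫⁻ x in Ioo (0 : ℝ) 1, ENNReal.ofReal (exp (c * u x ^ 2))
      ≤ ∫⁻ x in Ioo (0 : ℝ) 1,
          ENNReal.ofReal (exp (2 * c * k ^ 2)) * ENNReal.ofReal (exp (2 * c * b x ^ 2)) :=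
        lintegral_mono fun x => by
          rw [← ENNReal.ofReal_mul (exp_nonneg _), ← exp_add]
          gcongr
          exact hsplit x
    _ = ENNReal.ofReal (exp (2 * c * k ^ 2)) *
          ∫⁻ x in Ioo (0 : ℝ) 1, ENNReal.ofReal (exp (2 * c * b x ^ 2)) :=
        lintegral_const_mul' _ _ ENNReal.ofReal_ne_top
    _ ≤ ENNReal.ofReal (exp (2 * c * k ^ 2)) * ENNReal.ofReal K := by
        gcongr
        exact hK b hb _ (by positivity) hk.le
    _ < ∞ := ENNReal.mul_lt_top ENNReal.ofReal_lt_top ENNReal.ofReal_lt_top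

lemma lintegral_exp_mul_add_sq_le {Ω : Type*} [MeasurableSpace Ω] (μ : Measure Ω) {r s : ℝ}
    (h : r.HolderConjugate s) {f g : Ω → ℝ} (hf : Measurable f) (hg : Measurable g) {c : ℝ}
    (hc : 0 ≤ c) :
    ∫⁻ x, ENNReal.ofReal (exp (c * (f x + g x) ^ 2)) ∂μ ≤
      (∫⁻ x, ENNReal.ofReal (exp (r ^ 2 * c * f x ^ 2)) ∂μ) ^ (1 / r) *
        (∫⁻ x, ENNReal.ofReal (exp (s ^ 2 * c * g x ^ 2)) ∂μ) ^ (1 / s) := by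
  have hrpow : ∀ t y : ℝ, ENNReal.ofReal (exp (t * y)) ^ t = ENNReal.ofReal (exp (t ^ 2 * y)) :=
    fun t y => by rw [ENNReal.ofReal_rpow_of_pos (exp_pos _), ← exp_mul]; ring_nf
  calc ∫⁻ x, ENNReal.ofReal (exp (c * (f x + g x) ^ 2)) ∂μ
      ≤ ∫⁻ x, ((fun x => ENNReal.ofReal (exp (r * (c * f x ^ 2)))) *
          fun x => ENNReal.ofReal (exp (s * (c * g x ^ 2)))) x ∂μ :=
        lintegral_mono fun x => by
          rw [Pi.mul_apply, ← ENNReal.ofReal_mul (exp_nonneg _), ← exp_add]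
          gcongr
          nlinarith [add_sq_le_of_holderConjugate h (f x) (g x)]
    _ ≤ _ := ENNReal.lintegral_mul_le_Lp_mul_Lq μ h (by fun_prop) (by fun_prop)
    _ = _ := by simp only [hrpow, mul_assoc]

lemma exists_forall_le_ofReal_of_eventually_le {a : ℕ → ℝ≥0∞} {B : ℝ≥0∞} (ha : ∀ n, a n ≠ ∞)
    (hB : B ≠ ∞) (h : ∀ᶠ n in atTop, a n ≤ B) : ∃ C : ℝ, ∀ n, a n ≤ ENNReal.ofReal C := by
  obtain ⟨N, hN⟩ := eventually_atTop.mp h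
  refine ⟨(B + ∑ k ∈ Finset.range N, a k).toReal, fun n => ?_⟩
  rw [ENNReal.ofReal_toReal (ENNReal.add_ne_top.mpr ⟨hB, ENNReal.sum_ne_top.mpr fun k _ => ha k⟩)]
  rcases le_or_gt N n with hn | hn
  · exact (hN n hn).trans le_self_add
  · exact (Finset.single_le_sum (fun _ _ => zero_le) (Finset.mem_range.mpr hn)).trans
      le_add_self

lemma tendsto_gagSq_sub {v : ℕ → ℝ → ℝ} {w : ℝ → ℝ} {s : ℝ} (hv : ∀ n, memH (v n))
    (hw : memH w) (hnorm : Tendsto (fun n => gagSq (v n)) atTop (𝓝 s))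
    (hweak : Tendsto (fun n => innerX (v n) w) atTop (𝓝 (innerX w w))) :
    Tendsto (fun n => gagSq (fun x => v n x - w x)) atTop (𝓝 (s - gagSq w)) := by
  have h := (hnorm.sub (hweak.const_mul 2)).add_const (gagSq w)
  rw [innerX_self, show s - 2 * gagSq w + gagSq w = s - gagSq w by ring] at h
  exact h.congr fun n => (gagSq_sub (hv n) hw).symm

lemma exists_one_lt_pow_mul_lt {a b : ℝ} (h : a < b) (n : ℕ) : ∃ r, 1 < r ∧ r ^ n * a < b := by
  have hlim : Tendsto (fun r : ℝ => r ^ n * a) (𝓝[>] 1) (𝓝 a) :=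
    ((continuous_pow n).mul continuous_const |>.tendsto' 1 _ (by simp)).mono_left
      nhdsWithin_le_nhds
  exact (eventually_mem_nhdsWithin.and (hlim.eventually_lt_const h)).exists

lemma lintegral_exp_mul_sq_le_of_gagSq_sub_le {β K r s c : ℝ}
    (hK : ∀ u : ℝ → ℝ, memX u → ∀ c : ℝ, 0 ≤ c → c * gagSq u ≤ β →
      ∫⁻ x in Ioo (0 : ℝ) 1, ENNReal.ofReal (exp (c * u x ^ 2)) ≤ ENNReal.ofReal K)
    (h : r.HolderConjugate s) {u w : ℝ → ℝ} (hu : memX u) (hw : memX w) (hc : 0 ≤ c)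
    (huw : r ^ 2 * c * gagSq (fun x => u x - w x) ≤ β) :
    ∫⁻ x in Ioo (0 : ℝ) 1, ENNReal.ofReal (exp (c * u x ^ 2)) ≤
      ENNReal.ofReal K ^ (1 / r) *
        (∫⁻ x in Ioo (0 : ℝ) 1, ENNReal.ofReal (exp (s ^ 2 * c * w x ^ 2))) ^ (1 / s) := by
  have hholder := lintegral_exp_mul_add_sq_le (volume.restrict (Ioo (0 : ℝ) 1)) h
    (f := fun x => u x - w x) (hu.1.1.sub hw.1.1) hw.1.1 hc
  simp only [sub_add_cancel] at hholder
  exact hholder.trans <| mul_le_mul_left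
    (ENNReal.rpow_le_rpow (hK _ (memX_sub hu hw) _ (by positivity) huw) h.one_div_nonneg) _

theorem statement9_general (ω : ℝ) (hTM : TMprop ω)
    (v : ℕ → ℝ → ℝ) (hvX : ∀ n, memX (v n)) (hvnorm : ∀ n, gagNorm (v n) = 1)
    (w : ℝ → ℝ) (hwX : memX w)
    (hweak : ∀ z : ℝ → ℝ, memX z →
      Filter.Tendsto (fun n => innerX (v n) z) Filter.atTop (𝓝 (innerX w z)))
    (hw1 : gagNorm w < 1)
    (α : ℝ) (hα0 : 0 < α) (hα : α < 2 * π * ω)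
    (p : ℝ) (hp1 : 1 < p) (hp : p < (1 - gagNorm w ^ 2)⁻¹) :
    ∃ C : ℝ, ∀ n : ℕ,
      (∫⁻ x in Ioo (0 : ℝ) 1, ENNReal.ofReal (exp (p * α * (v n x) ^ 2))) ≤
        ENNReal.ofReal C := by
  have hω : 0 < ω := pos_of_mul_pos_right (hα0.trans hα) (by positivity)
  set L := 1 - gagNorm w ^ 2
  have hL : 0 < L := by nlinarith [gagNorm_nonneg w]
  have hpα : 0 < p * α := by positivity
  have hpαL : p * α * L < 2 * π * ω := by
    have hpL : p * L < 1 := by simpa [hL.ne'] using mul_lt_mul_of_pos_right hp hL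
    nlinarith
  -- `r ^ 2` is lost to Hölder's inequality and one more `r` to `‖v n - w‖² < r L`
  obtain ⟨r, hr1, hr⟩ := exists_one_lt_pow_mul_lt hpαL 3
  have hrs : r.HolderConjugate r.conjExponent := .conjExponent hr1
  obtain ⟨K, hK⟩ := hTM.exists_lintegral_exp_le (by positivity) hr
  have hdist : ∀ᶠ n in atTop, gagSq (fun x => v n x - w x) < r * L := by
    have hnorm : Tendsto (fun n => gagSq (v n)) atTop (𝓝 1) :=
      tendsto_const_nhds.congr fun n => by rw [← gagNorm_sq, hvnorm n, one_pow]
    refine (tendsto_gagSq_sub (fun n => (hvX n).1) hwX.1 hnorm (hweak w hwX)).eventually_lt_const ?_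
    rw [← gagNorm_sq]
    nlinarith
  refine exists_forall_le_ofReal_of_eventually_le
    (fun n => (lintegral_exp_mul_sq_lt_top hω hTM (hvX n) hpα.le).ne)
    (ENNReal.mul_ne_top
      (ENNReal.rpow_ne_top_of_nonneg hrs.one_div_nonneg (ENNReal.ofReal_ne_top (r := K)))
      (ENNReal.rpow_ne_top_of_nonneg hrs.symm.one_div_nonneg
        (lintegral_exp_mul_sq_lt_top hω hTM hwX (c := r.conjExponent ^ 2 * (p * α))
          (by positivity)).ne)) ?_
  filter_upwards [hdist] with n hn
  refine lintegral_exp_mul_sq_le_of_gagSq_sub_le hK hrs (hvX n) hwX hpα.le ?_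
  calc r ^ 2 * (p * α) * gagSq (fun x => v n x - w x) ≤ r ^ 2 * (p * α) * (r * L) := by gcongr
    _ = r ^ 3 * (p * α * L) := by ring

/-- Lions-type lemma (Lemma 2.6). -/
theorem statement9 (ω : ℝ) (hω0 : 0 < ω) (hωπ : ω ≤ π) (hTM : TMprop ω)
    (v : ℕ → ℝ → ℝ) (hvX : ∀ n, memX (v n)) (hvnorm : ∀ n, gagNorm (v n) = 1)
    (w : ℝ → ℝ) (hwX : memX w)
    (hweak : ∀ z : ℝ → ℝ, memX z →
      Filter.Tendsto (fun n => innerX (v n) z) Filter.atTop (𝓝 (innerX w z)))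
    (hw0 : 0 < gagNorm w) (hw1 : gagNorm w < 1)
    (α : ℝ) (hα0 : 0 < α) (hα : α < 2 * π * ω)
    (p : ℝ) (hp1 : 1 < p) (hp : p < (1 - gagNorm w ^ 2)⁻¹) :
    ∃ C : ℝ, ∀ n : ℕ,
      (∫⁻ x in Ioo (0 : ℝ) 1, ENNReal.ofReal (exp (p * α * (v n x) ^ 2))) ≤
        ENNReal.ofReal C :=
  statement9_general ω hTM v hvX hvnorm w hwX hweak hw1 α hα0 hα p hp1 hp
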